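/- Let p̄, r̄, s̄ ∈ R^n have positive entries with p̄ strictly increasing and p̄·x* − s̄ = r̄. Let (x̂, b̂) minimize ‖p̄·x − b·e − r̄‖². If s̄ is non-constant nonincreasing then b̂ > (∑ s̄_i)/n; if s̄ is non-constant nondecreasing then b̂ < (∑ s̄_i)/n; if s̄ is constant then b̂ = (∑ s̄_i)/n. -/

import Mathlib

/-!
Eliminating x̂ from the two normal equations of the fit and substituting r̄ = p̄ x* − s̄ gives
  b̂ − (∑ s̄ᵢ)/n = (‖p̄‖₁/n) · (‖p̄‖₁ ∑ s̄ᵢ − n p̄ᵀs̄) / (n‖p̄‖² − ‖p̄‖₁²).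
The denominator is positive because p̄ is not constant, and the sign of ‖p̄‖₁ ∑ s̄ᵢ − n p̄ᵀs̄ is
decided by Chebyshev's sum inequality, which is strict here because p̄ is injective: positive when
s̄ is antitone, negative when it is monotone, zero when it is constant.
-/

open Finset

section Chebyshev

variable {ι α : Type*} [Fintype ι] [CommRing α]

theorem sum_sum_sub_mul_sub (f g : ι → α) :
    ∑ i, ∑ j, (f j - f i) * (g j - g i) =
      2 * (Fintype.card ι * ∑ i, f i * g i - (∑ i, f i) * ∑ i, g i) := by
  simp only [sub_mul, mul_sub, sum_sub_distrib, sum_const, card_univ, nsmul_eq_mul,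
    ← mul_sum, ← sum_mul]
  ring

variable [LinearOrder α] [IsStrictOrderedRing α] {f g : ι → α}

theorem Monovary.sum_mul_sum_lt_card_mul_sum (hfg : Monovary f g) {i j : ι} (hf : f i ≠ f j)
    (hg : g i ≠ g j) : (∑ i, f i) * ∑ i, g i < Fintype.card ι * ∑ i, f i * g i := by
  have hij : 0 < (f j - f i) * (g j - g i) :=
    (hfg.sub_mul_sub_nonneg i j).lt_of_ne
      (mul_ne_zero (sub_ne_zero.2 hf.symm) (sub_ne_zero.2 hg.symm)).symm
  have hsum : 0 < ∑ i, ∑ j, (f j - f i) * (g j - g i) :=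
    sum_pos' (fun k _ => sum_nonneg fun l _ => hfg.sub_mul_sub_nonneg k l)
      ⟨i, mem_univ _, sum_pos' (fun l _ => hfg.sub_mul_sub_nonneg i l) ⟨j, mem_univ _, hij⟩⟩
  rw [sum_sum_sub_mul_sub] at hsum
  linarith

theorem Antivary.card_mul_sum_lt_sum_mul_sum (hfg : Antivary f g) {i j : ι} (hf : f i ≠ f j)
    (hg : g i ≠ g j) : Fintype.card ι * ∑ i, f i * g i < (∑ i, f i) * ∑ i, g i := by
  have hneg : Monovary f (-g) := monovary_iff_forall_mul_nonneg.2 fun k l => by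
    simp only [Pi.neg_apply]
    linear_combination hfg.sub_mul_sub_nonpos k l
  simpa [mul_neg] using hneg.sum_mul_sum_lt_card_mul_sum hf (neg_injective.ne hg)

theorem sq_sum_lt_card_mul_sum_sq {i j : ι} (hf : f i ≠ f j) :
    (∑ i, f i) ^ 2 < Fintype.card ι * ∑ i, f i ^ 2 := by
  simpa only [sq] using (monovary_self f).sum_mul_sum_lt_card_mul_sum hf hf

end Chebyshev

section LeastSquares

variable {ι K : Type*} [Fintype ι] [Field K] [LinearOrder K] [IsStrictOrderedRing K]

theorem sum_mul_eq_zero_of_forall_sum_sq_le (u v : ι → K)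
    (h : ∀ t : K, ∑ i, u i ^ 2 ≤ ∑ i, (u i + t * v i) ^ 2) : ∑ i, u i * v i = 0 := by
  have hquad : ∀ t : K, 0 ≤ (∑ i, v i ^ 2) * (t * t) + 2 * (∑ i, u i * v i) * t + 0 := by
    intro t
    have expand : ∑ i, (u i + t * v i) ^ 2 =
        ∑ i, u i ^ 2 + ((∑ i, v i ^ 2) * (t * t) + 2 * (∑ i, u i * v i) * t) := by
      simp only [mul_sum, sum_mul, ← sum_add_distrib]
      exact sum_congr rfl fun i _ => by ring
    linarith [h t]
  have := discrim_le_zero hquad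
  rw [discrim] at this
  nlinarith [sq_nonneg (∑ i, u i * v i)]

theorem sum_residual_eq_zero_and_sum_residual_mul_eq_zero (p r : ι → K) {xh bh : K}
    (hmin : ∀ x b : K, ∑ i, (xh * p i - bh - r i) ^ 2 ≤ ∑ i, (x * p i - b - r i) ^ 2) :
    ∑ i, (xh * p i - bh - r i) = 0 ∧ ∑ i, (xh * p i - bh - r i) * p i = 0 := by
  constructor
  · have := sum_mul_eq_zero_of_forall_sum_sq_le (fun i => xh * p i - bh - r i) (fun _ => -1)
      fun t => by convert hmin xh (bh + t) using 3; ring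
    simpa only [mul_neg_one, sum_neg_distrib, neg_eq_zero] using this
  · exact sum_mul_eq_zero_of_forall_sum_sq_le _ _ fun t => by
      convert hmin (xh + t) bh using 3; ring

theorem intercept_mul_eq (p r : ι → K) {xh bh : K}
    (hmin : ∀ x b : K, ∑ i, (xh * p i - bh - r i) ^ 2 ≤ ∑ i, (x * p i - b - r i) ^ 2) :
    bh * (Fintype.card ι * ∑ i, p i ^ 2 - (∑ i, p i) ^ 2) =
      (∑ i, p i) * ∑ i, p i * r i - (∑ i, p i ^ 2) * ∑ i, r i := by
  obtain ⟨h1, h2⟩ := sum_residual_eq_zero_and_sum_residual_mul_eq_zero p r hmin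
  have hpp : ∑ i, xh * p i * p i = xh * ∑ i, p i ^ 2 := by
    rw [mul_sum]; exact sum_congr rfl fun i _ => by ring
  simp only [sub_mul, sum_sub_distrib, sum_const, card_univ, nsmul_eq_mul, ← mul_sum, hpp,
    mul_comm (r _)] at h1 h2
  linear_combination (∑ i, p i) * h2 - (∑ i, p i ^ 2) * h1

theorem intercept_sub_mean_eq [Nonempty ι] (p r s : ι → K) {xstar xh bh : K}
    (hr : ∀ i, p i * xstar - s i = r i)
    (hmin : ∀ x b : K, ∑ i, (xh * p i - bh - r i) ^ 2 ≤ ∑ i, (x * p i - b - r i) ^ 2)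
    (hD : Fintype.card ι * ∑ i, p i ^ 2 - (∑ i, p i) ^ 2 ≠ 0) :
    bh - (∑ i, s i) / Fintype.card ι =
      (∑ i, p i) / Fintype.card ι * ((∑ i, p i) * (∑ i, s i) - Fintype.card ι * ∑ i, p i * s i) /
        (Fintype.card ι * ∑ i, p i ^ 2 - (∑ i, p i) ^ 2) := by
  have hfit := intercept_mul_eq p r hmin
  obtain rfl : r = fun i => p i * xstar - s i := (funext hr).symm
  have hpp : ∑ i, p i * (p i * xstar) = xstar * ∑ i, p i ^ 2 := by
    rw [mul_sum]; exact sum_congr rfl fun i _ => by ring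
  simp only [mul_sub, sum_sub_distrib, ← sum_mul, hpp] at hfit
  have hcard : (Fintype.card ι : K) ≠ 0 := Nat.cast_ne_zero.2 Fintype.card_ne_zero
  field_simp
  linear_combination (Fintype.card ι : K) * hfit

end LeastSquares

theorem cor_logan_item2_general (n : ℕ) (hn : 2 ≤ n) (p r s : Fin n → ℝ)
    (hp : ∀ i, 0 < p i)
    (hpm : StrictMono p)
    (xstar : ℝ) (hexact : ∀ i, p i * xstar - s i = r i)
    (xh bh : ℝ)
    (hmin : ∀ x b : ℝ,
      ∑ i, (xh * p i - bh - r i) ^ 2 ≤ ∑ i, (x * p i - b - r i) ^ 2) :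
    ((Antitone s ∧ (∃ i j, s i ≠ s j)) → bh > (∑ i, s i) / n) ∧
      ((Monotone s ∧ (∃ i j, s i ≠ s j)) → bh < (∑ i, s i) / n) ∧
      ((∃ c : ℝ, ∀ i, s i = c) → bh = (∑ i, s i) / n) := by
  have : Nonempty (Fin n) := ⟨⟨0, by omega⟩⟩
  have hn0 : (0 : ℝ) < n := by positivity
  have hP : 0 < ∑ i, p i := sum_pos (fun i _ => hp i) univ_nonempty
  have hD : 0 < n * ∑ i, p i ^ 2 - (∑ i, p i) ^ 2 := by
    have h01 : (⟨0, by omega⟩ : Fin n) ≠ ⟨1, by omega⟩ := by simp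
    simpa using sq_sum_lt_card_mul_sum_sq (hpm.injective.ne h01)
  have key := intercept_sub_mean_eq p r s hexact hmin (by simpa using hD.ne')
  rw [Fintype.card_fin] at key
  refine ⟨?_, ?_, ?_⟩
  · rintro ⟨hs, i, j, hij⟩
    have hcov := (hpm.monotone.antivary hs).card_mul_sum_lt_sum_mul_sum
      (hpm.injective.ne (ne_of_apply_ne s hij)) hij
    rw [Fintype.card_fin] at hcov
    have := div_pos (mul_pos (div_pos hP hn0) (sub_pos.2 hcov)) hD
    linarith
  · rintro ⟨hs, i, j, hij⟩
    have hcov := (hpm.monotone.monovary hs).sum_mul_sum_lt_card_mul_sum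
      (hpm.injective.ne (ne_of_apply_ne s hij)) hij
    rw [Fintype.card_fin] at hcov
    have := div_neg_of_neg_of_pos (mul_neg_of_pos_of_neg (div_pos hP hn0) (sub_neg.2 hcov)) hD
    linarith
  · rintro ⟨c, hc⟩
    have hcov : (∑ i, p i) * (∑ i, s i) - n * ∑ i, p i * s i = 0 := by
      simp only [hc, ← sum_mul, sum_const, card_univ, Fintype.card_fin, nsmul_eq_mul]
      ring
    rwa [hcov, mul_zero, zero_div, sub_eq_zero] at key

theorem cor_logan_item2 (n : ℕ) (hn : 2 ≤ n) (p r s : Fin n → ℝ)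
    (hp : ∀ i, 0 < p i) (hr : ∀ i, 0 < r i) (hs : ∀ i, 0 < s i)
    (hpm : StrictMono p)
    (xstar : ℝ) (hexact : ∀ i, p i * xstar - s i = r i)
    (xh bh : ℝ)
    (hmin : ∀ x b : ℝ,
      ∑ i, (xh * p i - bh - r i) ^ 2 ≤ ∑ i, (x * p i - b - r i) ^ 2) :
    ((Antitone s ∧ (∃ i j, s i ≠ s j)) → bh > (∑ i, s i) / n) ∧
      ((Monotone s ∧ (∃ i j, s i ≠ s j)) → bh < (∑ i, s i) / n) ∧
      ((∃ c : ℝ, ∀ i, s i = c) → bh = (∑ i, s i) / n) :=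
  cor_logan_item2_general n hn p r s hp hpm xstar hexact xh bh hmin
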